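/- Mignotte's bound on factor coefficients: if f ∈ ℤ[x] has degree n and g ∈ ℤ[x] divides f, then every coefficient of g has absolute value at most 2^n times the Euclidean norm (ℓ₂ norm of the coefficient vector) of f. -/

import Mathlib

/-!
The Mahler measure `M` is multiplicative and `M(h) ≥ |lead h| ≥ 1` for a nonzero integer
polynomial `h`, so `M(g) ≤ M(f)` whenever `g ∣ f`. By Vieta, `|g_i| ≤ C(deg g, i) · M(g)`, and
Landau's inequality `M(f) ≤ ‖f‖₂` finishes, with `C(deg g, i) ≤ 2^deg g ≤ 2^deg f`.
-/

open Polynomial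

namespace Polynomial

theorem mahlerMeasure_map_intCast_le_sqrt_sum_sq_coeff (p : ℤ[X]) :
    (p.map (Int.castRingHom ℂ)).mahlerMeasure ≤
      √(∑ j ∈ Finset.range (p.natDegree + 1), (p.coeff j : ℝ) ^ 2) := by
  have hinj := (Int.castRingHom ℂ).injective_int
  refine (mahlerMeasure_le_sqrt_sum_sq_norm_coeff _).trans_eq ?_
  rw [support_map_of_injective _ hinj, Finset.sum_subset supp_subset_range_natDegree_succ
    fun j _ hj ↦ by simp [notMem_support_iff.1 hj]]
  simp

theorem abs_coeff_le_choose_mul_mahlerMeasure_of_dvd {f g : ℤ[X]} (hf : f ≠ 0) (hdvd : g ∣ f)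
    (i : ℕ) :
    (|g.coeff i| : ℝ) ≤ g.natDegree.choose i * (f.map (Int.castRingHom ℂ)).mahlerMeasure := by
  obtain ⟨h, rfl⟩ := hdvd
  have hinj := (Int.castRingHom ℂ).injective_int
  have hcoeff := norm_coeff_le_choose_mul_mahlerMeasure_of_one_le_mahlerMeasure i
    (g.map (Int.castRingHom ℂ)) _ (one_le_mahlerMeasure_of_ne_zero (right_ne_zero_of_mul hf))
  rw [natDegree_map_eq_of_injective hinj, coeff_map, ← Polynomial.map_mul] at hcoeff
  simpa using hcoeff

end Polynomial

/-- Mignotte's bound: if `g ∈ ℤ[x]` divides a nonzero `f ∈ ℤ[x]` of degree `n`, then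
every coefficient of `g` has absolute value at most `2^n` times the Euclidean norm of
the coefficient vector of `f`. -/
theorem stmt_12 (f g : Polynomial ℤ) (hf : f ≠ 0) (hdvd : g ∣ f) (i : ℕ) :
    (|g.coeff i| : ℝ) ≤
      2 ^ f.natDegree *
        Real.sqrt (∑ j ∈ Finset.range (f.natDegree + 1), ((f.coeff j : ℝ)) ^ 2) := by
  have hchoose : (g.natDegree.choose i : ℝ) ≤ 2 ^ f.natDegree := by
    exact_mod_cast (Nat.choose_le_two_pow _ _).trans
      (Nat.pow_le_pow_right two_pos (natDegree_le_of_dvd hdvd hf))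
  calc (|g.coeff i| : ℝ)
      ≤ g.natDegree.choose i * (f.map (Int.castRingHom ℂ)).mahlerMeasure :=
        abs_coeff_le_choose_mul_mahlerMeasure_of_dvd hf hdvd i
    _ ≤ 2 ^ f.natDegree * √(∑ j ∈ Finset.range (f.natDegree + 1), (f.coeff j : ℝ) ^ 2) := by
        gcongr
        · exact mahlerMeasure_nonneg _
        · exact mahlerMeasure_map_intCast_le_sqrt_sum_sq_coeff f
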